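/- For every λ > 1 there exist n_0 > 0 and ε > 0 such that: for any directed acyclic graph G on n ≥ n_0 nodes with positive edge costs in which every node lies on some s-t path, if the cost ratio c_β(s,t)/d(s,t) of a naive present-biased agent exceeds λ^n, then the undirected skeleton of G contains a k-fan minor for some k ≥ εn. -/

import Mathlib

/-- `L` is a path from `v` to `t` in the graph with edge relation `E`. -/
def IsPathFrom {V : Type*} (E : V → V → Prop) (v t : V) (L : List V) : Prop :=
  L.Chain' E ∧ L.head? = some v ∧ L.getLast? = some t

/-- Total (true) cost of a path, given edge costs `c`. -/
def pathCost {V : Type*} (c : V → V → ℝ) : List V → ℝ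
  | a :: b :: rest => c a b + pathCost c (b :: rest)
  | _ => 0

/-- Present-biased perceived cost of a path: first edge at face value,
all later edges discounted by `β`. -/
def perceivedCost {V : Type*} (β : ℝ) (c : V → V → ℝ) : List V → ℝ
  | a :: b :: rest => c a b + β * pathCost c (b :: rest)
  | _ => 0

/-- The traversal of a naive present-biased agent (fixed-goal model): at each node `v ≠ t`
it follows the first edge of a `v`-`t` path minimizing the perceived cost, then re-plans. -/
inductive AgentPath {V : Type*} (β : ℝ) (E : V → V → Prop) (c : V → V → ℝ) (t : V) :
    V → List V → Prop
  | base : AgentPath β E c t t [t]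
  | step {v w : V} {Q L : List V} :
      v ≠ t →
      IsPathFrom E v t (v :: w :: Q) →
      (∀ P, IsPathFrom E v t P →
        perceivedCost β c (v :: w :: Q) ≤ perceivedCost β c P) →
      AgentPath β E c t w L →
      AgentPath β E c t v (v :: L)

/-- `d v` is the true shortest-path distance from `v` to `t`. -/
def IsDist {V : Type*} (E : V → V → Prop) (c : V → V → ℝ) (t : V) (d : V → ℝ) : Prop :=
  ∀ v, (∃ P, IsPathFrom E v t P ∧ pathCost c P = d v) ∧
    ∀ P, IsPathFrom E v t P → d v ≤ pathCost c P

/-- The undirected skeleton of a directed graph. -/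
def Skeleton {V : Type*} (E : V → V → Prop) : V → V → Prop := fun x y => E x y ∨ E y x

/-- The set `X` is connected under the (symmetric) adjacency `A`. -/
def ConnIn {V : Type*} (A : V → V → Prop) (X : Set V) : Prop :=
  ∀ a ∈ X, ∀ b ∈ X, Relation.ReflTransGen (fun x y => A x y ∧ x ∈ X ∧ y ∈ X) a b

/-- The graph with adjacency `A` contains the `k`-fan `F_k` as a minor: there are pairwise
disjoint nonempty connected super-nodes `S 0, …, S (k-1)` (the path of the fan) and `W`
(the hub), with an `A`-edge between consecutive path super-nodes and from every path
super-node to the hub. -/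
def HasFanMinor {V : Type*} (A : V → V → Prop) (k : ℕ) : Prop :=
  ∃ (S : Fin k → Set V) (W : Set V),
    (∀ i, (S i).Nonempty) ∧ W.Nonempty ∧
    (Pairwise fun i j => Disjoint (S i) (S j)) ∧
    (∀ i, Disjoint (S i) W) ∧
    (∀ i, ConnIn A (S i)) ∧ ConnIn A W ∧
    (∀ i j : Fin k, (i : ℕ) + 1 = (j : ℕ) → ∃ a ∈ S i, ∃ b ∈ S j, A a b) ∧
    (∀ i, ∃ a ∈ S i, ∃ b ∈ W, A a b)

section helpers
variable {V : Type*} {E : V → V → Prop} {c : V → V → ℝ} {t : V} {β : ℝ} {d : V → ℝ}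

lemma pathCost_nonneg (hc : ∀ v w, E v w → 0 < c v w) :
    ∀ {L : List V}, L.Chain' E → 0 ≤ pathCost c L
  | [], _ => le_refl _
  | [a], _ => le_refl _
  | a0 :: b0 :: rest, h => by
    simp only [List.Chain', List.isChain_cons_cons] at h
    have := pathCost_nonneg hc h.2
    have := (hc a0 b0 h.1).le
    simp only [pathCost]; linarith

lemma pathCost_pos (hc : ∀ v w, E v w → 0 < c v w) {a b : V} {rest : List V}
    (h : (a :: b :: rest).Chain' E) : 0 < pathCost c (a :: b :: rest) := by
  simp only [List.Chain', List.isChain_cons_cons] at h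
  have h1 := hc a b h.1
  have h2 := pathCost_nonneg hc h.2
  simp only [pathCost]; linarith

lemma pathCost_append (c : V → V → ℝ) (u : V) :
    ∀ (A B : List V), pathCost c (A ++ u :: B) = pathCost c (A ++ [u]) + pathCost c (u :: B)
  | [], B => by simp [pathCost]
  | [a], B => by simp [pathCost]
  | a :: a' :: A', B => by
    have := pathCost_append c u (a' :: A') B
    simp only [List.cons_append, List.append_eq, pathCost] at *
    linarith

lemma perceived_le_pathCost (hβ1 : β ≤ 1) (hc : ∀ v w, E v w → 0 < c v w) :
    ∀ {L : List V}, L.Chain' E → perceivedCost β c L ≤ pathCost c L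
  | [], _ => le_refl _
  | [a], _ => le_refl _
  | a0 :: b0 :: rest, h => by
    simp only [List.Chain', List.isChain_cons_cons] at h
    have h2 := pathCost_nonneg hc h.2
    simp only [perceivedCost, pathCost]
    nlinarith [hc a0 b0 h.1]

lemma dist_nonneg' (hc : ∀ v w, E v w → 0 < c v w) (hd : IsDist E c t d) (v : V) :
    0 ≤ d v := by
  obtain ⟨P, hP, hPc⟩ := (hd v).1
  rw [← hPc]; exact pathCost_nonneg hc hP.1

lemma isPathFrom_single : IsPathFrom E t t [t] :=
  ⟨List.isChain_singleton t, rfl, rfl⟩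

lemma dist_t_eq_zero (hc : ∀ v w, E v w → 0 < c v w) (hd : IsDist E c t d) : d t = 0 := by
  have h1 := (hd t).2 [t] isPathFrom_single
  have h2 := dist_nonneg' hc hd t
  simp only [pathCost] at h1
  linarith

lemma dist_pos_of_ne (hc : ∀ v w, E v w → 0 < c v w) (hd : IsDist E c t d) {v : V}
    (hv : v ≠ t) : 0 < d v := by
  obtain ⟨P, hP, hPc⟩ := (hd v).1
  rw [← hPc]
  match P, hP with
  | [], ⟨_, h, _⟩ => simp at h
  | [a], ⟨_, h1, h2⟩ =>
    simp only [List.head?, List.getLast?] at h1 h2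
    exact absurd (h1.symm.trans h2) (by simpa using hv)
  | a :: b :: rest, hP => exact pathCost_pos hc hP.1

/-- key structure extracted from an agent path -/
lemma agent_chain (hβ0 : 0 < β) (hβ1 : β ≤ 1) (hc : ∀ v w, E v w → 0 < c v w)
    (hd : IsDist E c t d) {v : V} {L : List V} (h : AgentPath β E c t v L) :
    L.Chain' (fun a b => E a b ∧ c a b + β * d b ≤ d a) ∧
      L.head? = some v ∧ L.getLast? = some t := by
  induction h with
  | base => exact ⟨List.isChain_singleton t, rfl, rfl⟩
  | @step v w Q L' hvt hPath hOpt hAgent ih =>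
    obtain ⟨ihc, ihh, ihl⟩ := ih
    have hLne : L' ≠ [] := by rintro rfl; simp at ihh
    constructor
    · simp only [List.Chain', List.isChain_cons]
      refine ⟨?_, ihc⟩
      intro y hy
      rw [ihh, Option.mem_some_iff] at hy
      subst hy
      have hEvw : E v w := (List.isChain_cons_cons.mp hPath.1).1
      refine ⟨hEvw, ?_⟩
      -- perceived optimality against the true shortest path
      obtain ⟨P₀, hP₀, hP₀c⟩ := (hd v).1
      have h1 : perceivedCost β c (v :: w :: Q) ≤ perceivedCost β c P₀ := hOpt P₀ hP₀
      have h2 : perceivedCost β c P₀ ≤ pathCost c P₀ := perceived_le_pathCost hβ1 hc hP₀.1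
      have h3 : IsPathFrom E w t (w :: Q) := by
        refine ⟨hPath.1.tail, rfl, ?_⟩
        have := hPath.2.2
        rwa [List.getLast?_cons_cons] at this
      have h4 : d w ≤ pathCost c (w :: Q) := (hd w).2 _ h3
      have h5 : perceivedCost β c (v :: w :: Q) = c v w + β * pathCost c (w :: Q) := rfl
      nlinarith
    · refine ⟨rfl, ?_⟩
      obtain ⟨a, l, rfl⟩ : ∃ a l, L' = a :: l := by
        cases L' with
        | nil => exact absurd rfl hLne
        | cons a l => exact ⟨a, l, rfl⟩
      rwa [List.getLast?_cons_cons]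

end helpers

section helpers2
variable {V : Type*} {E : V → V → Prop} {c : V → V → ℝ} {t : V} {β : ℝ} {d : V → ℝ}
  {f : V → ℕ}

/-- telescoping bound on the cost of a chain satisfying the per-step inequality -/
lemma telescope (hβ1 : β ≤ 1) (G : ℝ) :
    ∀ (L : List V), L.Chain' (fun a b => E a b ∧ c a b + β * d b ≤ d a) →
    (∀ u ∈ L, 0 ≤ d u) → (∀ u ∈ L, d u ≤ G) →
    ∀ v, L.head? = some v →
      pathCost c L ≤ d v + (1 - β) * (L.length - 1 : ℕ) * G := by
  intro L
  induction L with
  | nil => intro _ _ _ v hv; simp at hv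
  | cons a l ih =>
    intro hch h0 hG v hv
    rw [show v = a by simpa using hv.symm]
    cases l with
    | nil => simpa [pathCost] using h0 a (by simp)
    | cons b rest =>
      simp only [List.Chain', List.isChain_cons_cons] at hch
      have ih' := ih hch.2
        (fun u hu => h0 u (List.mem_cons_of_mem _ hu))
        (fun u hu => hG u (List.mem_cons_of_mem _ hu)) b rfl
      have hdb : d b ≤ G := hG b (by simp)
      have hdb0 : 0 ≤ d b := h0 b (by simp)
      have hstep := hch.1.2
      simp only [pathCost]
      have hcast : (((a :: b :: rest).length - 1 : ℕ) : ℝ)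
          = ((b :: rest).length - 1 : ℕ) + 1 := by simp
      rw [hcast]
      nlinarith [hG a (by simp), h0 a (by simp)]

/-- each node strictly after the head of a shortest path has strictly smaller distance -/
lemma tail_dist_lt (hc : ∀ v w, E v w → 0 < c v w) (hd : IsDist E c t d)
    {x u : V} {P : List V} (hP : IsPathFrom E x t P) (hPc : pathCost c P = d x)
    (hu : u ∈ P.tail) : d u < d x := by
  obtain ⟨T, rfl⟩ : ∃ T, P = x :: T := by
    cases P with
    | nil => simp [IsPathFrom] at hP
    | cons a l =>
      obtain rfl : x = a := by simpa using hP.2.1.symm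
      exact ⟨l, rfl⟩
  simp only [List.tail_cons] at hu
  obtain ⟨T1, T2, rfl⟩ := List.append_of_mem hu
  have hsplit : pathCost c (x :: (T1 ++ u :: T2)) =
      pathCost c ((x :: T1) ++ [u]) + pathCost c (u :: T2) := by
    have := pathCost_append c u (x :: T1) T2
    simpa using this
  have hpre : ((x :: T1) ++ [u]).Chain' E := by
    apply hP.1.prefix
    exact ⟨T2, by simp⟩
  have hprepos : 0 < pathCost c ((x :: T1) ++ [u]) := by
    cases T1 with
    | nil =>
      have : E x u := by simpa [List.Chain'] using hpre
      simpa [pathCost] using hc x u this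
    | cons a l =>
      have hpre' : (x :: a :: (l ++ [u])).Chain' E := by
        simpa using hpre
      simpa using pathCost_pos hc hpre'
  have hne : (u :: T2) ≠ [] := by simp
  have hsuf : IsPathFrom E u t (u :: T2) := by
    refine ⟨hP.1.suffix ⟨x :: T1, by simp⟩, rfl, ?_⟩
    have h2 := hP.2.2
    rw [show x :: (T1 ++ u :: T2) = (x :: T1) ++ (u :: T2) by simp,
      List.getLast?_append, List.getLast?_eq_getLast hne] at h2
    rw [List.getLast?_eq_getLast hne]
    simpa using h2
  have hdu : d u ≤ pathCost c (u :: T2) := (hd u).2 _ hsuf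
  linarith [hsplit ▸ hPc]

end helpers2

section helpers3
variable {V : Type*} {E : V → V → Prop} {t : V} {f : V → ℕ}

lemma skeleton_symm : Symmetric (Skeleton E) := fun _ _ h => Or.symm h

lemma rel_symm (X : Set V) :
    Symmetric (fun x y => Skeleton E x y ∧ x ∈ X ∧ y ∈ X) :=
  fun _ _ ⟨h1, h2, h3⟩ => ⟨skeleton_symm h1, h3, h2⟩

/-- everything on an `E`-path inside `X` reaches the last node of the path -/
lemma connTo_getLast (X : Set V) :
    ∀ (P : List V), P.Chain' E → (∀ u ∈ P, u ∈ X) → ∀ u ∈ P, ∀ z, P.getLast? = some z →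
    Relation.ReflTransGen (fun x y => Skeleton E x y ∧ x ∈ X ∧ y ∈ X) u z := by
  intro P
  induction P with
  | nil => intro _ _ u hu; simp at hu
  | cons a l ih =>
    intro hch hX u hu z hz
    cases l with
    | nil =>
      obtain rfl : u = a := by simpa using hu
      obtain rfl : z = u := by simpa using hz.symm
      exact Relation.ReflTransGen.refl
    | cons b rest =>
      rw [List.getLast?_cons_cons] at hz
      simp only [List.Chain', List.isChain_cons_cons] at hch
      have hbz : Relation.ReflTransGen _ b z :=
        ih hch.2 (fun w hw => hX w (List.mem_cons_of_mem _ hw)) b (by simp) z hz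
      rcases List.mem_cons.mp hu with rfl | hu'
      · refine Relation.ReflTransGen.head ?_ hbz
        exact ⟨Or.inl hch.1, hX u (by simp), hX b (by simp)⟩
      · exact ih hch.2 (fun w hw => hX w (List.mem_cons_of_mem _ hw)) u hu' z hz

/-- an interval of consecutive nodes of a path is connected in the skeleton -/
lemma conn_interval (node : ℕ → V) (lo hi : ℕ)
    (h : ∀ r, lo ≤ r → r + 1 < hi → E (node r) (node (r + 1))) :
    ConnIn (Skeleton E) (node '' Set.Ico lo hi) := by
  set X := node '' Set.Ico lo hi with hX
  have claim : ∀ r, lo ≤ r → r < hi →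
      Relation.ReflTransGen (fun x y => Skeleton E x y ∧ x ∈ X ∧ y ∈ X)
        (node lo) (node r) := by
    intro r
    induction r with
    | zero =>
      intro hlo _
      obtain rfl : lo = 0 := Nat.le_zero.mp hlo
      exact Relation.ReflTransGen.refl
    | succ r ihr =>
      intro hlo hhi
      rcases Nat.lt_or_ge lo (r + 1) with hlt | hge
      · have hlor : lo ≤ r := Nat.lt_succ_iff.mp hlt
        refine Relation.ReflTransGen.tail (ihr hlor (Nat.lt_of_succ_lt hhi)) ?_
        refine ⟨Or.inl (h r hlor hhi), ?_, ?_⟩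
        · exact ⟨r, ⟨hlor, Nat.lt_of_succ_lt hhi⟩, rfl⟩
        · exact ⟨r + 1, ⟨Nat.le_of_lt hlt, hhi⟩, rfl⟩
      · obtain rfl : lo = r + 1 := le_antisymm hlo hge
        exact Relation.ReflTransGen.refl
  intro a ha b hb
  obtain ⟨r, hr, rfl⟩ := ha
  obtain ⟨r', hr', rfl⟩ := hb
  have h1 := claim r hr.1 hr.2
  have h2 := claim r' hr'.1 hr'.2
  exact Relation.ReflTransGen.trans (Std.Symm.symm (self := @Relation.ReflTransGen.stdSymm _ _ ⟨fun a b h => rel_symm X h⟩) _ _ h1) h2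

end helpers3

section helpers4
variable {V : Type*} {E : V → V → Prop} {f : V → ℕ}

instance fLtTrans (f : V → ℕ) : IsTrans V (fun a b => f a < f b) :=
  ⟨fun _ _ _ h1 h2 => lt_trans h1 h2⟩

lemma chain'_pairwise_f {L : List V} (hch : L.Chain' E)
    (hf : ∀ v w, E v w → f v < f w) : L.Pairwise (fun a b => f a < f b) :=
  List.isChain_iff_pairwise.mp (List.IsChain.imp (fun a b h => hf a b h) hch)

/-- every node on the tail of a path has strictly larger `f` than the head -/
lemma tail_f_gt {P : List V} (hch : P.Chain' E) (hf : ∀ v w, E v w → f v < f w)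
    {x u : V} (hx : P.head? = some x) (hu : u ∈ P.tail) : f x < f u := by
  have hp := chain'_pairwise_f hch hf
  cases P with
  | nil => simp at hx
  | cons a l =>
    obtain rfl : x = a := by simpa using hx.symm
    exact (List.pairwise_cons.mp hp).1 u (by simpa using hu)

end helpers4

/-- numeric choice of `n0` -/
lemma n0_numeric (lam : ℝ) (hlam : 1 < lam) :
    ∃ n0 : ℕ, 1 ≤ n0 ∧ ∀ n : ℕ, n0 ≤ n →
      (n : ℝ) * Real.log lam / 2 + Real.log n ≤ Real.log (lam ^ n - 1) := by
  set Lg := Real.log lam with hLg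
  have hL : 0 < Lg := Real.log_pos hlam
  refine ⟨⌈36 / Lg ^ 2 + 1 / Lg⌉₊ + 1, le_add_self, ?_⟩
  intro n hn
  have hnR : 36 / Lg ^ 2 + 1 / Lg ≤ (n : ℝ) := by
    calc 36 / Lg ^ 2 + 1 / Lg ≤ (⌈36 / Lg ^ 2 + 1 / Lg⌉₊ : ℝ) := Nat.le_ceil _
    _ ≤ (n : ℝ) := by exact_mod_cast le_trans (Nat.le_succ _) hn
  have h36 : 36 / Lg ^ 2 ≤ (n : ℝ) := by
    have : 0 ≤ 1 / Lg := by positivity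
    linarith
  have h1L : 1 / Lg ≤ (n : ℝ) := by
    have : 0 ≤ 36 / Lg ^ 2 := by positivity
    linarith
  have hn0 : (0 : ℝ) < n := lt_of_lt_of_le (by positivity) h1L
  have hnLg : 1 ≤ (n : ℝ) * Lg := by
    rw [div_le_iff₀ hL] at h1L; linarith
  have hlamn : lam ^ n = Real.exp ((n : ℝ) * Lg) := by
    rw [show lam = Real.exp Lg from (Real.exp_log (lt_trans one_pos hlam)).symm,
      ← Real.exp_nat_mul, mul_comm]
  have h2lam : (2 : ℝ) ≤ lam ^ n := by
    rw [hlamn]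
    calc (2 : ℝ) ≤ (n : ℝ) * Lg + 1 := by linarith
    _ ≤ Real.exp ((n : ℝ) * Lg) := Real.add_one_le_exp _
  -- `log (lam ^ n - 1) ≥ n Lg - log 2`
  have hhalf : lam ^ n / 2 ≤ lam ^ n - 1 := by linarith
  have hpos2 : (0 : ℝ) < lam ^ n / 2 := by linarith
  have hlog1 : (n : ℝ) * Lg - Real.log 2 ≤ Real.log (lam ^ n - 1) := by
    have := Real.log_le_log hpos2 hhalf
    rw [Real.log_div (by linarith) (by norm_num), Real.log_pow] at this
    linarith
  -- `log (2 n) ≤ n Lg / 2`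
  have hsqrt2 : Real.sqrt 2 ≤ 3 / 2 := by
    nlinarith [Real.sq_sqrt (by norm_num : (0:ℝ) ≤ 2), Real.sqrt_nonneg 2]
  have hsqrtn : 6 / Lg ≤ Real.sqrt n := by
    have h1 : Real.sqrt (36 / Lg ^ 2) ≤ Real.sqrt n := Real.sqrt_le_sqrt h36
    have h2 : Real.sqrt (36 / Lg ^ 2) = 6 / Lg := by
      rw [show 36 / Lg ^ 2 = (6 / Lg) ^ 2 by ring]
      exact Real.sqrt_sq (by positivity)
    linarith
  have hsq : Real.sqrt n * Real.sqrt n = (n : ℝ) := Real.mul_self_sqrt (le_of_lt hn0)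
  have hlog2n : Real.log (2 * n) ≤ (n : ℝ) * Lg / 2 := by
    have e1 : Real.log (2 * n) = 2 * Real.log (Real.sqrt (2 * n)) := by
      rw [Real.log_sqrt (by positivity)]; ring
    have e2 : Real.log (Real.sqrt (2 * n)) ≤ Real.sqrt (2 * n) - 1 :=
      Real.log_le_sub_one_of_pos (Real.sqrt_pos.mpr (by positivity))
    have e3 : Real.sqrt (2 * n) = Real.sqrt 2 * Real.sqrt n :=
      Real.sqrt_mul (by norm_num) _
    have e4 : Real.sqrt 2 * Real.sqrt n ≤ (3 / 2) * Real.sqrt n :=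
      mul_le_mul_of_nonneg_right hsqrt2 (Real.sqrt_nonneg _)
    have e5 : 3 * Real.sqrt n ≤ (n : ℝ) * Lg / 2 := by
      have h6 : 6 ≤ Real.sqrt n * Lg := by
        rw [div_le_iff₀ hL] at hsqrtn; linarith
      nlinarith [Real.sqrt_nonneg n]
    linarith
  have hfin : Real.log 2 + Real.log n ≤ (n : ℝ) * Lg / 2 := by
    rw [← Real.log_mul (by norm_num) (ne_of_gt hn0)]
    exact hlog2n
  linarith

lemma mem_of_getLast?' {V : Type*} {l : List V} {a : V} (h : l.getLast? = some a) : a ∈ l := by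
  obtain ⟨hne, rfl⟩ := List.mem_getLast?_eq_getLast (Option.mem_def.mpr h)
  exact List.getLast_mem hne

lemma path_shape {V : Type*} {E : V → V → Prop} {x t : V} {P : List V}
    (hP : IsPathFrom E x t P) (hxt : x ≠ t) : ∃ y rest, P = x :: y :: rest := by
  cases P with
  | nil => simp [IsPathFrom] at hP
  | cons a l =>
    obtain rfl : x = a := by simpa using hP.2.1.symm
    cases l with
    | nil =>
      exact absurd (by simpa using hP.2.2) hxt
    | cons b l' => exact ⟨b, l', rfl⟩


set_option maxHeartbeats 1000000 in
/-- Theorem 1: for every `λ > 1` (and bias parameter `β`) there are `n₀` and `ε > 0` such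
that any `n`-node instance (`n ≥ n₀`, positive edge costs, every node on some `s`-`t` path)
on which the agent's cost ratio exceeds `λ ^ n` has a `k`-fan minor in its skeleton for
some `k ≥ ε n`. -/
theorem fan_minor_of_high_cost_ratio (lam β : ℝ) (hlam : 1 < lam)
    (hβ0 : 0 < β) (hβ1 : β ≤ 1) :
    ∃ (n0 : ℕ) (ε : ℝ), 0 < ε ∧
      ∀ (V : Type) (_ : Fintype V) (E : V → V → Prop) (c : V → V → ℝ) (s t : V)
        (d : V → ℝ) (f : V → ℕ) (L : List V) (n : ℕ),
        Fintype.card V = n → n0 ≤ n →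
        (∀ v w, E v w → 0 < c v w) →
        (∀ v w, E v w → f v < f w) →
        (∀ v, ∃ P, IsPathFrom E s t P ∧ v ∈ P) →
        IsDist E c t d →
        AgentPath β E c t s L →
        lam ^ n * d s < pathCost c L →
        ∃ k : ℕ, ε * (n : ℝ) ≤ (k : ℝ) ∧ HasFanMinor (Skeleton E) k := by
  classical
  obtain ⟨n0, hn01, hn0⟩ := n0_numeric lam hlam
  have hLg : 0 < Real.log lam := Real.log_pos hlam
  have h2β : (1 : ℝ) < 2 / β := by rw [lt_div_iff₀ hβ0]; linarith
  have hlog2β : 0 < Real.log (2 / β) := Real.log_pos h2β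
  refine ⟨n0, Real.log lam / (2 * Real.log (2 / β)), by positivity, ?_⟩
  intro V _ E c s t d f L n hcard hn hcpos hf _hallpath hdist hagent hratio
  have hn1 : 1 ≤ n := le_trans hn01 hn
  have hlamn1 : 1 < lam ^ n := one_lt_pow₀ hlam (by omega)
  have hd0 : ∀ v, 0 ≤ d v := dist_nonneg' hcpos hdist
  have hdt : d t = 0 := dist_t_eq_zero hcpos hdist
  obtain ⟨hchainR, hhead, hlast⟩ := agent_chain hβ0 hβ1 hcpos hdist hagent
  have hchainE : L.Chain' E := hchainR.imp (fun a b h => h.1)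
  have hpairf : L.Pairwise (fun a b => f a < f b) := chain'_pairwise_f hchainE hf
  have hLne : L ≠ [] := by rintro rfl; simp at hhead
  -- positivity of d s
  have hds : 0 < d s := by
    rcases eq_or_ne s t with rfl | hst
    · exfalso
      cases hagent with
      | base =>
        rw [hdt, mul_zero] at hratio
        simp only [pathCost] at hratio
        exact lt_irrefl 0 hratio
      | step h _ _ _ => exact h rfl
    · exact dist_pos_of_ne hcpos hdist hst
  -- the maximum of d over the traversed path
  have hLfin : L.toFinset.Nonempty := (List.toFinset_nonempty_iff L).mpr hLne
  obtain ⟨xm, hxmL, hxmmax⟩ := Finset.exists_max_image L.toFinset d hLfin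
  rw [List.mem_toFinset] at hxmL
  have hxmax : ∀ u ∈ L, d u ≤ d xm := fun u hu => hxmmax u (List.mem_toFinset.mpr hu)
  have hdxm0 : 0 ≤ d xm := hd0 xm
  have htel := telescope hβ1 (d xm) L hchainR (fun u _ => hd0 u) hxmax s hhead
  have hlen_le : L.length ≤ n := by
    have hnd : L.Nodup := hpairf.imp (fun h heq => absurd (heq ▸ h) (lt_irrefl _))
    calc L.length ≤ Fintype.card V := hnd.length_le_card
    _ = n := hcard
  -- rule out β = 1
  rcases lt_or_eq_of_le hβ1 with hβlt | rfl
  swap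
  · exfalso
    nlinarith [htel]
  -- main case: β < 1
  have hgp : (lam ^ n - 1) * d s < n * d xm := by
    have h1 : (1 - β) * ((L.length - 1 : ℕ) : ℝ) * d xm ≤ (n : ℝ) * d xm := by
      have hle : ((L.length - 1 : ℕ) : ℝ) ≤ (n : ℝ) := by
        exact_mod_cast le_trans (Nat.sub_le _ _) hlen_le
      have hx0 : (0:ℝ) ≤ ((L.length - 1 : ℕ) : ℝ) := Nat.cast_nonneg _
      have e1 : ((L.length - 1 : ℕ) : ℝ) * d xm ≤ (n : ℝ) * d xm :=
        mul_le_mul_of_nonneg_right hle hdxm0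
      nlinarith [mul_nonneg (mul_nonneg hβ0.le hx0) hdxm0]
    nlinarith
  have hnpos : (0 : ℝ) < n := by exact_mod_cast (by omega : 0 < n)
  have hdxm : 0 < d xm := by nlinarith
  -- indexing along the agent path
  set ℓ := L.length with hℓdef
  obtain ⟨m, hm⟩ : ∃ m, ℓ = m + 1 := by
    cases L with
    | nil => exact absurd rfl hLne
    | cons a l => exact ⟨l.length, rfl⟩
  set node : ℕ → V := fun r => L.getD r t with hnodedef
  have hnode_get : ∀ r (h : r < ℓ), node r = L.get ⟨r, h⟩ := fun r h => List.getD_eq_getElem L t h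
  have hnode0 : node 0 = s := by
    rw [hnode_get 0 (by omega), List.get_mk_zero (by omega)]
    have := List.head?_eq_head hLne
    rw [hhead] at this
    exact (Option.some_injective _ this).symm
  have hnodem : node m = t := by
    rw [hnode_get m (by omega)]
    have h1 := List.getLast?_eq_getLast hLne
    rw [hlast] at h1
    have h2 := List.getLast_eq_getElem hLne
    rw [h2] at h1
    have h4 := Option.some_injective _ h1
    rw [List.get_eq_getElem, h4]
    have h5 : L.length - 1 = m := by omega
    simp only [h5]
  have hstepR : ∀ r, r + 1 < ℓ →
      E (node r) (node (r + 1)) ∧ c (node r) (node (r + 1)) + β * d (node (r + 1)) ≤ d (node r) := by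
    intro r hr
    have := List.isChain_iff_getElem.mp hchainR r (by omega)
    rw [hnode_get r (by omega), hnode_get (r + 1) (by omega)]
    exact this
  have hfmono : ∀ r r', r < r' → r' < ℓ → f (node r) < f (node r') := by
    intro r r' h1 h2
    rw [hnode_get r (by omega), hnode_get r' (by omega)]
    exact List.pairwise_iff_get.mp hpairf ⟨r, by omega⟩ ⟨r', by omega⟩ h1
  have hinj : ∀ r r', r < ℓ → r' < ℓ → node r = node r' → r = r' := by
    intro r r' h1 h2 heq
    rcases Nat.lt_trichotomy r r' with h | h | h
    · exact absurd (hfmono r r' h h2) (by rw [heq]; exact lt_irrefl _)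
    · exact h
    · exact absurd (hfmono r' r h h1) (by rw [← heq]; exact lt_irrefl _)
  -- the peak index
  obtain ⟨pf, hpf⟩ := List.mem_iff_get.mp hxmL
  set p := (pf : ℕ) with hpdef
  have hpl : p < ℓ := pf.2
  have hnodep : node p = xm := by rw [hnode_get p hpl]; exact hpf
  have hpm : p < m := by
    have hpne : p ≠ m := by
      intro h
      rw [← hnodep, h, hnodem] at hdxm
      linarith [hdt ▸ hdxm]
    omega
  have hposd : ∀ r, r < m → 0 < d (node r) := by
    intro r hr
    apply dist_pos_of_ne hcpos hdist
    intro h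
    have := hinj r m (by omega) (by omega) (h.trans hnodem.symm)
    omega
  -- suffix minima
  set Pq : ℕ → Prop := fun q => q ≤ p ∧ ∀ r, q < r → r ≤ p → d (node q) ≤ d (node r) with hPqdef
  have key : ∀ q, Pq q → q < p →
      ∃ q', (Pq q' ∧ q < q') ∧ β * d (node q') ≤ d (node q) := by
    intro q hq hqp
    obtain ⟨q', hq'mem, hq'min⟩ := Finset.exists_min_image (Finset.Icc (q + 1) p)
      (fun r => d (node r)) ⟨q + 1, Finset.mem_Icc.mpr ⟨le_refl _, hqp⟩⟩
    rw [Finset.mem_Icc] at hq'mem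
    refine ⟨q', ⟨⟨hq'mem.2, fun r hr1 hr2 =>
      hq'min r (Finset.mem_Icc.mpr ⟨by omega, hr2⟩)⟩, by omega⟩, ?_⟩
    have h1 : d (node q') ≤ d (node (q + 1)) :=
      hq'min (q + 1) (Finset.mem_Icc.mpr ⟨le_refl _, hqp⟩)
    have h2 := (hstepR q (by omega)).2
    have h3 := hcpos _ _ (hstepR q (by omega)).1
    nlinarith
  obtain ⟨q0, hq0mem, hq0min⟩ := Finset.exists_min_image (Finset.range (p + 1))
    (fun r => d (node r)) ⟨0, Finset.mem_range.mpr (by omega)⟩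
  rw [Finset.mem_range] at hq0mem
  have hq0P : Pq q0 := ⟨by omega, fun r h1 h2 => hq0min r (Finset.mem_range.mpr (by omega))⟩
  have hq0s : d (node q0) ≤ d s := by
    have := hq0min 0 (Finset.mem_range.mpr (by omega))
    rwa [hnode0] at this
  -- the iterated suffix-minima chain
  set F : {q // Pq q} → {q // Pq q} := fun x =>
    if h : x.1 < p then ⟨(key x.1 x.2 h).choose, (key x.1 x.2 h).choose_spec.1.1⟩ else x
    with hFdef
  set A : ℕ → {q // Pq q} := fun j => F^[j] ⟨q0, hq0P⟩ with hAdef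
  have hA0 : A 0 = ⟨q0, hq0P⟩ := rfl
  have hAsucc : ∀ j, A (j + 1) = F (A j) := fun j => Function.iterate_succ_apply' F j _
  have hFlt : ∀ x : {q // Pq q}, (h : x.1 < p) →
      x.1 < (F x).1 ∧ β * d (node (F x).1) ≤ d (node x.1) := by
    intro x hx
    have h1 := (key x.1 x.2 hx).choose_spec
    simp only [hFdef, dif_pos hx]
    exact ⟨h1.1.2, h1.2⟩
  have hFeq : ∀ x : {q // Pq q}, ¬ x.1 < p → F x = x := by
    intro x hx; simp only [hFdef, dif_neg hx]
  have hAle : ∀ j, (A j).1 ≤ p := fun j => (A j).2.1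
  have hAmono : ∀ j, (A j).1 ≤ (A (j + 1)).1 := by
    intro j
    rw [hAsucc]
    by_cases h : (A j).1 < p
    · exact (hFlt _ h).1.le
    · rw [hFeq _ h]
  have hAreach : ∃ j, (A j).1 = p := by
    have hstep' : ∀ j, (A j).1 = p ∨ q0 + j ≤ (A j).1 := by
      intro j
      induction j with
      | zero =>
        right
        have h0 : (A 0).1 = q0 := rfl
        omega
      | succ j ih =>
        by_cases hj : (A j).1 < p
        · rcases ih with h | h
          · omega
          · right
            have := (hFlt _ hj).1
            rw [← hAsucc] at this
            omega
        · left
          rw [hAsucc, hFeq _ hj]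
          have := hAle j
          omega
    rcases hstep' (p + 1) with h | h
    · exact ⟨p + 1, h⟩
    · exact absurd (le_trans h (hAle (p + 1))) (by omega)
  obtain ⟨J, hAJ, hJlt⟩ : ∃ J, (A J).1 = p ∧ ∀ j, j < J → (A j).1 < p :=
    ⟨Nat.find hAreach, Nat.find_spec hAreach,
      fun j hj => lt_of_le_of_ne (hAle j) (Nat.find_min hAreach hj)⟩
  have hpow : ∀ j, j ≤ J → β ^ j * d (node ((A j).1)) ≤ d (node q0) := by
    intro j
    induction j with
    | zero => intro _; rw [hA0]; simp
    | succ j ih =>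
      intro hjJ
      have hj : (A j).1 < p := hJlt j (by omega)
      have h1 := (hFlt _ hj).2
      rw [← hAsucc] at h1
      have h2 := ih (by omega)
      have hβj : (0:ℝ) ≤ β ^ j := pow_nonneg hβ0.le j
      calc β ^ (j + 1) * d (node ((A (j+1)).1))
          = β ^ j * (β * d (node ((A (j+1)).1))) := by ring
        _ ≤ β ^ j * d (node ((A j).1)) := mul_le_mul_of_nonneg_left h1 hβj
        _ ≤ d (node q0) := h2
  have hstrict : ∀ i j, i < j → j ≤ J → (A i).1 < (A j).1 := by
    intro i j hij hjJ
    induction j with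
    | zero => omega
    | succ j ih =>
      rcases Nat.lt_succ_iff_lt_or_eq.mp hij with h | h
      · exact lt_of_lt_of_le (ih h (by omega)) (hAmono j)
      · subst h
        have := (hFlt _ (hJlt i (by omega))).1
        rw [← hAsucc] at this
        exact this
  -- numeric bound:  ε n ≤ J + 1
  have hkey1 : β ^ J * d (node p) ≤ d s := by
    have := hpow J le_rfl
    rw [hAJ] at this
    linarith
  have hβJpos : (0:ℝ) < β ^ J := pow_pos hβ0 J
  have hmain : (lam ^ n - 1) * β ^ J ≤ (n : ℝ) := by
    have h1 : β ^ J * ((lam ^ n - 1) * d s) ≤ β ^ J * ((n : ℝ) * d xm) :=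
      mul_le_mul_of_nonneg_left hgp.le hβJpos.le
    have h2 : β ^ J * d xm ≤ d s := by rw [← hnodep]; exact hkey1
    have h3 : β ^ J * ((n : ℝ) * d xm) = (n : ℝ) * (β ^ J * d xm) := by ring
    have h4 : β ^ J * ((n : ℝ) * d xm) ≤ (n : ℝ) * d s := by
      rw [h3]; exact mul_le_mul_of_nonneg_left h2 hnpos.le
    have h5 : (lam ^ n - 1) * β ^ J * d s ≤ (n : ℝ) * d s := by
      calc (lam ^ n - 1) * β ^ J * d s = β ^ J * ((lam ^ n - 1) * d s) := by ring
        _ ≤ β ^ J * ((n : ℝ) * d xm) := h1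
        _ ≤ (n : ℝ) * d s := h4
    exact le_of_mul_le_mul_right h5 hds
  have hJbound : (n : ℝ) * Real.log lam / 2 ≤ (J : ℝ) * Real.log (2 / β) := by
    have h5 : lam ^ n - 1 ≤ (n : ℝ) * (β⁻¹) ^ J := by
      rw [inv_pow, ← div_eq_mul_inv, le_div_iff₀ hβJpos]
      linarith [hmain]
    have hpos1 : (0:ℝ) < lam ^ n - 1 := by linarith
    have h6 : Real.log (lam ^ n - 1) ≤ Real.log n + (J : ℝ) * Real.log β⁻¹ := by
      calc Real.log (lam ^ n - 1) ≤ Real.log ((n : ℝ) * (β⁻¹) ^ J) :=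
            Real.log_le_log hpos1 h5
        _ = Real.log n + Real.log ((β⁻¹) ^ J) :=
            Real.log_mul (ne_of_gt hnpos) (pow_ne_zero _ (inv_ne_zero (ne_of_gt hβ0)))
        _ = Real.log n + (J : ℝ) * Real.log β⁻¹ := by rw [Real.log_pow]
    have h7 := hn0 n hn
    have h8 : Real.log β⁻¹ ≤ Real.log (2 / β) := by
      apply Real.log_le_log (by positivity)
      rw [div_eq_mul_inv]
      nlinarith [inv_pos.mpr hβ0]
    have h9 : (J : ℝ) * Real.log β⁻¹ ≤ (J : ℝ) * Real.log (2 / β) :=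
      mul_le_mul_of_nonneg_left h8 (Nat.cast_nonneg J)
    linarith
  refine ⟨J + 1, ?_, ?_⟩
  · rw [div_mul_eq_mul_div, div_le_iff₀ (by positivity)]
    have : ((J:ℝ) + 1) * (2 * Real.log (2 / β)) ≥ (J : ℝ) * (2 * Real.log (2/β)) := by
      nlinarith
    push_cast
    nlinarith [hJbound]
  · -- fan minor construction
    set a' : ℕ → ℕ := fun j => (A j).1 with ha'def
    have ha'P : ∀ j, Pq (a' j) := fun j => (A j).2
    have ha'le : ∀ j, a' j ≤ p := fun j => (A j).2.1
    have ha'mono : Monotone a' := monotone_nat_of_le_succ hAmono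
    have ha'strict : ∀ i j : ℕ, i < j → j ≤ J → a' i < a' j := hstrict
    set b' : ℕ → ℕ := fun j => max (a' (j+1)) (a' j + 1) with hb'def
    have hb'gt : ∀ j, a' j < b' j :=
      fun j => lt_of_lt_of_le (Nat.lt_succ_self _) (le_max_right _ _)
    have hb'le : ∀ j, b' j ≤ p + 1 :=
      fun j => max_le (le_trans (ha'le _) (Nat.le_succ p)) (Nat.succ_le_succ (ha'le j))
    have hb'eq : ∀ j, j < J → b' j = a' (j+1) := by
      intro j hj
      exact max_eq_left (ha'strict j (j+1) (Nat.lt_succ_self _) (by omega))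
    have hio : ∀ i j : ℕ, i < j → j ≤ J → b' i ≤ a' j := by
      intro i j hij hj
      rw [hb'eq i (by omega)]
      exact ha'mono (by omega : i + 1 ≤ j)
    have hmlt : m < ℓ := by omega
    have hne_t : ∀ r, r ≤ p → node r ≠ t := by
      intro r hr h
      have := hinj r m (by omega) (by omega) (h.trans hnodem.symm)
      omega
    have hSP : ∀ j : ℕ, ∃ P, IsPathFrom E (node (a' j)) t P ∧ pathCost c P = d (node (a' j)) :=
      fun j => (hdist (node (a' j))).1
    set SP : ℕ → List V := fun j => (hSP j).choose with hSPdef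
    have hSPspec : ∀ j, IsPathFrom E (node (a' j)) t (SP j) ∧ pathCost c (SP j) = d (node (a' j)) :=
      fun j => (hSP j).choose_spec
    set S : Fin (J+1) → Set V := fun j => node '' Set.Ico (a' (j:ℕ)) (b' (j:ℕ)) with hSdef
    set W : Set V := ⋃ j : Fin (J+1), {u | u ∈ (SP (j:ℕ)).tail} with hWdef
    have htail_d : ∀ j u, u ∈ (SP j).tail → d u < d (node (a' j)) :=
      fun j u hu => tail_dist_lt hcpos hdist (hSPspec j).1 (hSPspec j).2 hu
    have htail_f : ∀ j u, u ∈ (SP j).tail → f (node (a' j)) < f u :=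
      fun j u hu => tail_f_gt (hSPspec j).1.1 hf (hSPspec j).1.2.1 hu
    have hshape : ∀ j : ℕ, ∃ y rest, SP j = node (a' j) :: y :: rest :=
      fun j => path_shape (hSPspec j).1 (hne_t _ (ha'le j))
    have hWmem : ∀ u, u ∈ W ↔ ∃ j : Fin (J+1), u ∈ (SP (j:ℕ)).tail := by
      intro u
      simp only [hWdef, Set.mem_iUnion, Set.mem_setOf_eq]
    have hSmem : ∀ (i : Fin (J+1)) u, u ∈ S i ↔ ∃ r, (a' (i:ℕ) ≤ r ∧ r < b' (i:ℕ)) ∧ node r = u := by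
      intro i u
      simp only [hSdef, Set.mem_image, Set.mem_Ico]
    refine ⟨S, W, ?_, ?_, ?_, ?_, ?_, ?_, ?_, ?_⟩
    · -- nonempty
      intro i
      exact ⟨node (a' (i:ℕ)), ⟨a' (i:ℕ), ⟨le_refl _, hb'gt _⟩, rfl⟩⟩
    · -- W nonempty
      obtain ⟨y, rest, hsh⟩ := hshape 0
      have h1 := (hSPspec 0).1.2.2
      rw [hsh, List.getLast?_cons_cons] at h1
      refine ⟨t, (hWmem t).mpr ⟨⟨0, by omega⟩, ?_⟩⟩
      rw [hsh, List.tail_cons]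
      exact mem_of_getLast?' h1
    · -- pairwise disjoint
      have hSdisj : ∀ i j : Fin (J+1), (i:ℕ) < (j:ℕ) → Disjoint (S i) (S j) := by
        intro i j hij
        rw [Set.disjoint_left]
        rintro u ⟨r, hr, rfl⟩ ⟨r', hr', hrr⟩
        have hjJ : (j:ℕ) ≤ J := Nat.lt_succ_iff.mp j.2
        have h1 : b' (i:ℕ) ≤ a' (j:ℕ) := hio _ _ hij hjJ
        have hrl : r < ℓ := by
          have := hb'le (i:ℕ); have := hr.2; omega
        have hr'l : r' < ℓ := by
          have := hb'le (j:ℕ); have := hr'.2; omega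
        have := hinj r' r hr'l hrl hrr
        have := hr.2
        have := hr'.1
        omega
      intro i j hne
      rcases Nat.lt_trichotomy (i:ℕ) (j:ℕ) with h | h | h
      · exact hSdisj i j h
      · exact absurd (Fin.ext h) hne
      · exact (hSdisj j i h).symm
    · -- S i disjoint from W
      intro i
      rw [Set.disjoint_left]
      rintro u ⟨r, hr, rfl⟩ huW
      obtain ⟨jj, hjj⟩ := (hWmem _).mp huW
      have hd1 := htail_d (jj:ℕ) _ hjj
      have hf1 := htail_f (jj:ℕ) _ hjj
      have hrp : r ≤ p := by
        have := hb'le (i:ℕ); have := hr.2; omega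
      rcases le_or_gt r (a' (jj:ℕ)) with hle | hlt
      · rcases eq_or_lt_of_le hle with heq | hlt2
        · rw [heq] at hf1
          exact absurd hf1 (lt_irrefl _)
        · have h2 := hfmono r (a' (jj:ℕ)) hlt2 (by have := ha'le (jj:ℕ); omega)
          exact absurd (h2.trans hf1) (lt_irrefl _)
      · have h2 := (ha'P (jj:ℕ)).2 r hlt hrp
        exact absurd hd1 (not_lt.mpr h2)
    · -- each S i connected
      intro i
      apply conn_interval node (a' (i:ℕ)) (b' (i:ℕ))
      intro r hr1 hr2
      have := hb'le (i:ℕ)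
      exact (hstepR r (by omega)).1
    · -- W connected
      have hconn_t : ∀ (jj : Fin (J+1)) u, u ∈ (SP (jj:ℕ)).tail →
          Relation.ReflTransGen (fun x y => Skeleton E x y ∧ x ∈ W ∧ y ∈ W) u t := by
        intro jj u hu
        obtain ⟨y, rest, hsh⟩ := hshape (jj:ℕ)
        have hch : (SP (jj:ℕ)).tail.Chain' E := (hSPspec _).1.1.tail
        refine connTo_getLast W (SP (jj:ℕ)).tail hch ?_ u hu t ?_
        · intro w hw
          exact (hWmem w).mpr ⟨jj, hw⟩
        · have h1 := (hSPspec (jj:ℕ)).1.2.2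
          rw [hsh, List.getLast?_cons_cons] at h1
          rw [hsh, List.tail_cons]
          exact h1
      intro x hx y hy
      obtain ⟨jx, hjx⟩ := (hWmem _).mp hx
      obtain ⟨jy, hjy⟩ := (hWmem _).mp hy
      exact Relation.ReflTransGen.trans (hconn_t jx x hjx)
        (Std.Symm.symm (self := @Relation.ReflTransGen.stdSymm _ _ ⟨fun a b h => rel_symm W h⟩) _ _ (hconn_t jy y hjy))
    · -- consecutive supernodes are adjacent
      intro i j hij
      have hjJ : (j:ℕ) ≤ J := Nat.lt_succ_iff.mp j.2
      have hiJ : (i:ℕ) < J := by omega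
      have hstr : a' (i:ℕ) < a' (j:ℕ) := ha'strict _ _ (by omega) hjJ
      have hajl : a' (j:ℕ) < ℓ := by have := ha'le (j:ℕ); omega
      have h1 : (a' (j:ℕ) - 1) + 1 = a' (j:ℕ) := by omega
      have hedge : E (node (a' (j:ℕ) - 1)) (node (a' (j:ℕ))) := by
        have h2 := (hstepR (a' (j:ℕ) - 1) (by omega)).1
        rwa [h1] at h2
      refine ⟨node (a' (j:ℕ) - 1), ⟨a' (j:ℕ) - 1, ⟨?_, ?_⟩, rfl⟩,
        node (a' (j:ℕ)), ⟨a' (j:ℕ), ⟨le_refl _, hb'gt _⟩, rfl⟩, Or.inl hedge⟩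
      · omega
      · have hj1 : (i:ℕ) + 1 = (j:ℕ) := hij
        rw [hb'eq (i:ℕ) hiJ, hj1]
        omega
    · -- spokes to the hub
      intro i
      obtain ⟨y, rest, hsh⟩ := hshape (i:ℕ)
      have hch := (hSPspec (i:ℕ)).1.1
      rw [hsh] at hch
      have hE : E (node (a' (i:ℕ))) y := (List.isChain_cons_cons.mp hch).1
      refine ⟨node (a' (i:ℕ)), ⟨a' (i:ℕ), ⟨le_refl _, hb'gt _⟩, rfl⟩, y, ?_, Or.inl hE⟩
      refine (hWmem y).mpr ⟨i, ?_⟩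
      rw [hsh, List.tail_cons]
      exact List.mem_cons_self
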